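/- Let M = (ρ, E) be an (n,k,d,r,δ)_a-matroid with designated repair sets {R_x}_{x∈E} (so each R_x satisfies x ∈ R_x, |R_x| ≤ r + δ − 1, and d_{R_x} ≥ δ), with r < k and d = n − k + 1 − (⌈k/r⌉ − 1)(δ − 1). For Y ⊆ E write R_Y = ⋃_{x∈Y} R_x, and call R_Y a nontrivial union if R_x ⊄ R_{Y \ {x}} for every x ∈ Y. Then: (i) ∅ ∈ Z(M); (ii) for each x ∈ E, R_x ∈ Z(M), there is no cyclic flat Z with ∅ ⊊ Z ⊊ R_x (i.e., R_x is an atom of the lattice of cyclic flats), and η(R_x) = δ − 1; (iii) for each Y ⊆ E such that R_Y is a nontrivial union: (c) if |Y| < ⌈k/r⌉ then R_Y ∈ Z(M); (d) if |Y| < ⌈k/r⌉ then ρ(R_Y) = |R_Y| − |Y|(δ − 1); (e) if |Y| ≤ ⌈k/r⌉ then |R_x ∩ R_{Y\{x}}| ≤ |R_x| − δ for each x ∈ Y; (f) if |Y| ≥ ⌈k/r⌉ then the only cyclic flat of M containing R_Y is E. -/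

import Mathlib

/-- A matroid given by an integer-valued rank function on subsets of a finite ground set. -/
structure RankMatroid (α : Type) [DecidableEq α] where
  E : Finset α
  rk : Finset α → ℤ
  rk_nonneg : ∀ X : Finset α, X ⊆ E → 0 ≤ rk X
  rk_le_card : ∀ X : Finset α, X ⊆ E → rk X ≤ X.card
  rk_mono : ∀ X Y : Finset α, X ⊆ Y → Y ⊆ E → rk X ≤ rk Y
  rk_submod : ∀ X Y : Finset α, X ⊆ E → Y ⊆ E → rk (X ∪ Y) + rk (X ∩ Y) ≤ rk X + rk Y

namespace RankMatroid

variable {α : Type} [DecidableEq α]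

/-- The minimum distance `d_X` of the restriction to `X`:
`d_X = min {|Y| : Y ⊆ X, ρ(X \ Y) < ρ(X)}`. -/
noncomputable def dist (M : RankMatroid α) (X : Finset α) : ℕ :=
  sInf {m : ℕ | ∃ Y : Finset α, Y ⊆ X ∧ Y.card = m ∧ M.rk (X \ Y) < M.rk X}

/-- Closure: `cl(X) = {y ∈ E : ρ(X ∪ {y}) = ρ(X)}`. -/
def cl (M : RankMatroid α) (X : Finset α) : Finset α :=
  M.E.filter fun y => M.rk (insert y X) = M.rk X

/-- `X` is cyclic if `ρ(X \ {x}) = ρ(X)` for every `x ∈ X`. -/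
def Cyclic (M : RankMatroid α) (X : Finset α) : Prop :=
  ∀ x ∈ X, M.rk (X.erase x) = M.rk X

/-- Cyclic core: `cyc(X) = {x ∈ X : ρ(X \ {x}) = ρ(X)}`. -/
def cyc (M : RankMatroid α) (X : Finset α) : Finset α :=
  X.filter fun x => M.rk (X.erase x) = M.rk X

/-- A cyclic flat is a set which is both cyclic and a flat. -/
def IsCyclicFlat (M : RankMatroid α) (X : Finset α) : Prop :=
  X ⊆ M.E ∧ M.Cyclic X ∧ M.cl X = X

/-- `Z(M)`: the collection of cyclic flats of `M`. -/
def Z (M : RankMatroid α) : Set (Finset α) := {X | M.IsCyclicFlat X}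

/-- `M` is non-degenerate: every singleton has rank at least one and `d ≥ 2`. -/
def NonDegenerate (M : RankMatroid α) : Prop :=
  (∀ x ∈ M.E, 1 ≤ M.rk {x}) ∧ 2 ≤ M.dist M.E

/-- `R` is a repair set for `x` with parameters `(r, δ)`. -/
def IsRepairSet (M : RankMatroid α) (r δ : ℤ) (x : α) (R : Finset α) : Prop :=
  R ⊆ M.E ∧ x ∈ R ∧ (R.card : ℤ) ≤ r + δ - 1 ∧ δ ≤ (M.dist R : ℤ)

/-- The collection of cyclic flats of the restriction `M|X`. -/
def ZIn (M : RankMatroid α) (X : Finset α) : Set (Finset α) :=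
  {Y | Y ⊆ X ∧ M.Cyclic Y ∧ X.filter (fun z => M.rk (insert z Y) = M.rk Y) = Y}

/-- `FX` is the meet, in the lattice `(Z(M), ⊆)`, of all cyclic flats containing `X`. -/
def IsMeetOfFlatsContaining (M : RankMatroid α) (X FX : Finset α) : Prop :=
  FX ∈ M.Z ∧ (∀ F ∈ M.Z, X ⊆ F → FX ⊆ F) ∧
    ∀ W ∈ M.Z, (∀ F ∈ M.Z, X ⊆ F → W ⊆ F) → W ⊆ FX

end RankMatroid

/-!
Write `η` for the nullity and `θ = ⌈k / r⌉`. If a repair set `R` (so `d_R ≥ δ`) is not spanned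
by `Z`, then any `δ - 1` elements of `R \ Z` lie in the closure of the rest of `Z ∪ R`, so adding
`R` to `Z` raises the rank by at most `r` and the nullity by at least `δ - 1`. Optimality of `d`
says that every set of rank `< k` has nullity at most `(θ - 1)(δ - 1)`: extend it to rank `k - 1`
without changing its nullity and delete the complement.

For a nontrivial union `R_Y` with `|Y| < θ`, the first fact gives `η(R_Y) ≥ |Y|(δ - 1)` by
induction on `|Y|`, each `R_{Y \ x}` being a flat not containing `R_x`. On the other hand
`ρ(R_Y) ≤ |Y| r`, so `θ - 1 - |Y|` more repair sets can be added to `cl(R_Y)` while staying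
below rank `k`, whence `η(cl R_Y) ≤ |Y|(δ - 1)`. Both bounds together force `cl(R_Y) = R_Y`
with nullity exactly `|Y|(δ - 1)`; the remaining claims come from one more step
`R_{Y \ x} ↦ R_Y`.
-/

namespace RankMatroid

variable {α : Type} [DecidableEq α] {M : RankMatroid α}

def nullity (M : RankMatroid α) (X : Finset α) : ℤ := X.card - M.rk X

def IsNontrivialUnion (R : α → Finset α) (Y : Finset α) : Prop :=
  ∀ x ∈ Y, ¬ R x ⊆ (Y.erase x).biUnion R

theorem rk_empty (M : RankMatroid α) : M.rk ∅ = 0 :=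
  le_antisymm (by simpa using M.rk_le_card ∅ (Finset.empty_subset _))
    (M.rk_nonneg ∅ (Finset.empty_subset _))

theorem rk_insert_le {X : Finset α} {y : α} (hX : X ⊆ M.E) (hy : y ∈ M.E) :
    M.rk (insert y X) ≤ M.rk X + 1 := by
  have hy' : {y} ⊆ M.E := Finset.singleton_subset_iff.2 hy
  have hsub := M.rk_submod X {y} hX hy'
  have hy1 : M.rk {y} ≤ 1 := by simpa using M.rk_le_card {y} hy'
  have := M.rk_nonneg (X ∩ {y}) (Finset.inter_subset_left.trans hX)
  rw [Finset.union_singleton] at hsub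
  linarith

theorem rk_union_le_add_card {X B : Finset α} (hX : X ⊆ M.E) (hB : B ⊆ M.E) :
    M.rk (X ∪ B) ≤ M.rk X + B.card := by
  induction B using Finset.induction_on with
  | empty => simp
  | @insert b B hb ih =>
    have hB' := (Finset.subset_insert b B).trans hB
    have := rk_insert_le (Finset.union_subset hX hB') (hB (Finset.mem_insert_self b B))
    rw [Finset.union_insert, Finset.card_insert_of_notMem hb]
    push_cast
    linarith [ih hB']

theorem nullity_nonneg {X : Finset α} (hX : X ⊆ M.E) : 0 ≤ M.nullity X :=
  sub_nonneg.2 (M.rk_le_card X hX)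

theorem nullity_mono {X W : Finset α} (hXW : X ⊆ W) (hW : W ⊆ M.E) :
    M.nullity X ≤ M.nullity W := by
  have hrk := rk_union_le_add_card (hXW.trans hW) ((W.sdiff_subset (t := X)).trans hW)
  rw [Finset.union_sdiff_of_subset hXW] at hrk
  have hcard := Finset.card_sdiff_add_card_eq_card hXW
  unfold nullity
  omega

theorem mem_cl {X : Finset α} {y : α} :
    y ∈ M.cl X ↔ y ∈ M.E ∧ M.rk (insert y X) = M.rk X :=
  Finset.mem_filter

theorem cl_subset_E (X : Finset α) : M.cl X ⊆ M.E :=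
  Finset.filter_subset _ _

theorem subset_cl {X : Finset α} (hX : X ⊆ M.E) : X ⊆ M.cl X :=
  fun y hy => mem_cl.2 ⟨hX hy, by rw [Finset.insert_eq_self.2 hy]⟩

theorem rk_insert_eq_of_subset {X W : Finset α} {y : α} (hXW : X ⊆ W) (hW : W ⊆ M.E)
    (hy : y ∈ M.E) (h : M.rk (insert y X) = M.rk X) : M.rk (insert y W) = M.rk W := by
  have hyX : insert y X ⊆ M.E := Finset.insert_subset hy (hXW.trans hW)
  have hsub := M.rk_submod (insert y X) W hyX hW
  rw [Finset.insert_union, Finset.union_eq_right.2 hXW] at hsub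
  have := M.rk_mono X (insert y X ∩ W)
    (Finset.subset_inter (Finset.subset_insert y X) hXW) (Finset.inter_subset_right.trans hW)
  have := M.rk_mono W (insert y W) (Finset.subset_insert y W) (Finset.insert_subset hy hW)
  linarith

theorem cl_mono {X W : Finset α} (hXW : X ⊆ W) (hW : W ⊆ M.E) : M.cl X ⊆ M.cl W := by
  intro y hy
  obtain ⟨hyE, hyX⟩ := mem_cl.1 hy
  exact mem_cl.2 ⟨hyE, rk_insert_eq_of_subset hXW hW hyE hyX⟩

theorem rk_union_eq_of_subset_cl {W S : Finset α} (hW : W ⊆ M.E) (hS : S ⊆ M.cl W) :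
    M.rk (W ∪ S) = M.rk W := by
  induction S using Finset.induction_on with
  | empty => simp
  | @insert y S _ ih =>
    have hS' := (Finset.subset_insert y S).trans hS
    obtain ⟨hyE, hyW⟩ := mem_cl.1 (hS (Finset.mem_insert_self y S))
    rw [Finset.union_insert, ← ih hS']
    exact rk_insert_eq_of_subset Finset.subset_union_left
      (Finset.union_subset hW (hS'.trans (cl_subset_E W))) hyE hyW

theorem rk_cl {X : Finset α} (hX : X ⊆ M.E) : M.rk (M.cl X) = M.rk X := by
  simpa [Finset.union_eq_right.2 (subset_cl hX)] using rk_union_eq_of_subset_cl hX subset_rfl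

theorem subset_cl_of_rk_union_le {Z S : Finset α} (hZ : Z ⊆ M.E) (hS : S ⊆ M.E)
    (h : M.rk (Z ∪ S) ≤ M.rk Z) : S ⊆ M.cl Z := by
  intro y hy
  refine mem_cl.2 ⟨hS hy, le_antisymm ?_ ?_⟩
  · exact (M.rk_mono _ _ (Finset.insert_subset (Finset.mem_union_right Z hy)
      Finset.subset_union_left) (Finset.union_subset hZ hS)).trans h
  · exact M.rk_mono _ _ (Finset.subset_insert y Z) (Finset.insert_subset (hS hy) hZ)

theorem exists_mem_notMem_cl {X : Finset α} (hX : X ⊆ M.E) (h : M.rk X < M.rk M.E) :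
    ∃ y ∈ M.E, y ∉ M.cl X := by
  by_contra! hE
  have := M.rk_mono _ _ hE (cl_subset_E X)
  rw [rk_cl hX] at this
  omega

theorem rk_insert_of_notMem_cl {X : Finset α} {y : α} (hX : X ⊆ M.E) (hy : y ∈ M.E)
    (hyX : y ∉ M.cl X) : M.rk (insert y X) = M.rk X + 1 := by
  have := M.rk_mono _ _ (Finset.subset_insert y X) (Finset.insert_subset hy hX)
  have : M.rk (insert y X) ≠ M.rk X := fun h => hyX (mem_cl.2 ⟨hy, h⟩)
  have := rk_insert_le hX hy
  omega

theorem rk_lt_of_cl_eq {W : Finset α} (hW : W ⊆ M.E) (hcl : M.cl W = W) (hne : W ≠ M.E) :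
    M.rk W < M.rk M.E := by
  refine lt_of_le_of_ne (M.rk_mono W M.E hW subset_rfl) fun h => hne ?_
  refine Finset.Subset.antisymm hW fun y hy => hcl ▸ mem_cl.2 ⟨hy, le_antisymm ?_ ?_⟩
  · exact h ▸ M.rk_mono _ _ (Finset.insert_subset hy hW) subset_rfl
  · exact M.rk_mono _ _ (Finset.subset_insert y W) (Finset.insert_subset hy hW)

theorem cl_eq_of_nullity_cl_le {X : Finset α} (hX : X ⊆ M.E)
    (h : M.nullity (M.cl X) ≤ M.nullity X) : M.cl X = X := by
  have hcard : (M.cl X).card ≤ X.card := by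
    unfold nullity at h
    rw [rk_cl hX] at h
    omega
  exact (Finset.eq_of_subset_of_card_le (subset_cl hX) hcard).symm

theorem one_le_nullity_of_cyclic {X : Finset α} {x : α} (hX : X ⊆ M.E) (hc : M.Cyclic X)
    (hx : x ∈ X) : 1 ≤ M.nullity X := by
  have := M.rk_le_card (X.erase x) ((Finset.erase_subset x X).trans hX)
  rw [hc x hx, Finset.card_erase_of_mem hx] at this
  have := Finset.card_pos.2 ⟨x, hx⟩
  unfold nullity
  omega

theorem cyclic_empty (M : RankMatroid α) : M.Cyclic ∅ := by
  simp [Cyclic]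

theorem cyclic_union {X Y : Finset α} (hX : X ⊆ M.E) (hY : Y ⊆ M.E) (hcX : M.Cyclic X)
    (hcY : M.Cyclic Y) : M.Cyclic (X ∪ Y) := by
  have key : ∀ A ⊆ X ∪ Y, A ⊆ M.E → M.Cyclic A → ∀ x ∈ A,
      M.rk ((X ∪ Y).erase x) = M.rk (X ∪ Y) := by
    intro A hAXY hA hcA x hx
    have h := rk_insert_eq_of_subset (Finset.erase_subset_erase x hAXY)
      ((Finset.erase_subset x _).trans (Finset.union_subset hX hY)) (hA hx)
      (by rw [Finset.insert_erase hx, hcA x hx])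
    rw [Finset.insert_erase (hAXY hx)] at h
    exact h.symm
  intro x hx
  rcases Finset.mem_union.1 hx with h | h
  · exact key X Finset.subset_union_left hX hcX x h
  · exact key Y Finset.subset_union_right hY hcY x h

theorem cyclic_biUnion {Y : Finset α} {R : α → Finset α} (hRE : ∀ x ∈ Y, R x ⊆ M.E)
    (hc : ∀ x ∈ Y, M.Cyclic (R x)) : M.Cyclic (Y.biUnion R) := by
  induction Y using Finset.induction_on with
  | empty => simpa using cyclic_empty M
  | @insert b Y _ ih =>
    rw [Finset.biUnion_insert]
    exact cyclic_union (hRE b (Finset.mem_insert_self b Y))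
      (Finset.biUnion_subset.2 fun x hx => hRE x (Finset.mem_insert_of_mem hx))
      (hc b (Finset.mem_insert_self b Y))
      (ih (fun x hx => hRE x (Finset.mem_insert_of_mem hx))
        (fun x hx => hc x (Finset.mem_insert_of_mem hx)))

theorem rk_sdiff_eq_of_card_lt_dist {X T : Finset α} (hX : X ⊆ M.E) (hT : T ⊆ X)
    (hTd : T.card < M.dist X) : M.rk (X \ T) = M.rk X := by
  refine le_antisymm (M.rk_mono _ _ Finset.sdiff_subset hX) (not_lt.1 fun h => ?_)
  have : M.dist X ≤ T.card := Nat.sInf_le ⟨T, hT, rfl, h⟩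
  omega

theorem cyclic_of_two_le_dist {X : Finset α} (hX : X ⊆ M.E) (hd : 2 ≤ M.dist X) :
    M.Cyclic X := by
  intro x hx
  rw [Finset.erase_eq]
  exact rk_sdiff_eq_of_card_lt_dist hX (Finset.singleton_subset_iff.2 hx) (by simp; omega)

theorem subset_cl_sdiff_of_card_lt_dist {X T : Finset α} (hX : X ⊆ M.E) (hT : T ⊆ X)
    (hTd : T.card < M.dist X) : X ⊆ M.cl (X \ T) :=
  subset_cl_of_rk_union_le (Finset.sdiff_subset.trans hX) hX <| by
    rw [Finset.union_eq_right.2 Finset.sdiff_subset, rk_sdiff_eq_of_card_lt_dist hX hT hTd]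

theorem rk_union_add_card_le {Z S T : Finset α} (hZ : Z ⊆ M.E) (hS : S ⊆ M.E)
    (hT : T ⊆ S \ Z) (hTd : T.card < M.dist S) :
    M.rk (Z ∪ S) + T.card ≤ M.rk Z + (S \ Z).card := by
  have hTS : T ⊆ S := hT.trans Finset.sdiff_subset
  have hZST : Z ∪ S \ T ⊆ M.E := Finset.union_subset hZ (Finset.sdiff_subset.trans hS)
  have hcl : S ⊆ M.cl (Z ∪ S \ T) :=
    (subset_cl_sdiff_of_card_lt_dist hS hTS hTd).trans
      (cl_mono Finset.subset_union_right hZST)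
  have heq := rk_union_eq_of_subset_cl hZST hcl
  rw [Finset.union_assoc, Finset.union_eq_right.2 Finset.sdiff_subset] at heq
  have hsplit : Z ∪ S \ T = Z ∪ (S \ Z) \ T := by
    ext; simp only [Finset.mem_union, Finset.mem_sdiff]; tauto
  have hle := rk_union_le_add_card hZ (((S \ Z).sdiff_subset (t := T)).trans
    (Finset.sdiff_subset.trans hS))
  rw [← hsplit, ← heq, Finset.card_sdiff_of_subset hT] at hle
  have := Finset.card_le_card hT
  omega

theorem dist_le_card_sdiff {Z S : Finset α} (hZ : Z ⊆ M.E) (hS : S ⊆ M.E)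
    (hSZ : ¬ S ⊆ M.cl Z) : M.dist S ≤ (S \ Z).card := by
  by_contra! h
  have := rk_union_add_card_le hZ hS subset_rfl h
  exact hSZ (subset_cl_of_rk_union_le hZ hS (by omega))

theorem nullity_add_dist_sub_one_le {Z S : Finset α} (hZ : Z ⊆ M.E) (hS : S ⊆ M.E)
    (hSZ : ¬ S ⊆ M.cl Z) : M.nullity Z + M.dist S - 1 ≤ M.nullity (Z ∪ S) := by
  have hZS := Finset.union_subset hZ hS
  rcases Nat.eq_zero_or_pos (M.dist S) with hd | hd
  · have := nullity_mono Finset.subset_union_left hZS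
    omega
  obtain ⟨T, hT, hTcard⟩ := Finset.exists_subset_card_eq
    ((Nat.sub_le (M.dist S) 1).trans (dist_le_card_sdiff hZ hS hSZ))
  have := rk_union_add_card_le hZ hS hT (by omega)
  have hcard := Finset.card_sdiff_add_card S Z
  rw [Finset.union_comm S Z] at hcard
  unfold nullity
  omega

theorem eq_empty_of_mem_Z_of_ssubset {S W : Finset α} (hS : S ⊆ M.E)
    (hη : M.nullity S < M.dist S) (hW : W ∈ M.Z) (hWS : W ⊂ S) : W = ∅ := by
  obtain ⟨hWE, hWc, hWcl⟩ := hW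
  by_contra hne
  obtain ⟨w, hw⟩ := Finset.nonempty_iff_ne_empty.2 hne
  have hstep := nullity_add_dist_sub_one_le hWE hS
    (by rw [hWcl]; exact hWS.not_subset)
  rw [Finset.union_eq_right.2 hWS.subset] at hstep
  have := one_le_nullity_of_cyclic hWE hWc hw
  omega

theorem exists_superset_rk_eq_nullity_eq {X : Finset α} (hX : X ⊆ M.E) (n : ℕ)
    (hn : M.rk X + n ≤ M.rk M.E) :
    ∃ B, X ⊆ B ∧ B ⊆ M.E ∧ M.rk B = M.rk X + n ∧ M.nullity B = M.nullity X := by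
  induction n generalizing X with
  | zero => exact ⟨X, subset_rfl, hX, by simp, rfl⟩
  | succ n ih =>
    obtain ⟨y, hyE, hyX⟩ := exists_mem_notMem_cl hX (by omega)
    have hrk := rk_insert_of_notMem_cl hX hyE hyX
    have hcard := Finset.card_insert_of_notMem fun h => hyX (subset_cl hX h)
    obtain ⟨B, hXB, hBE, hBrk, hBη⟩ := ih (Finset.insert_subset hyE hX) (by omega)
    refine ⟨B, (Finset.subset_insert y X).trans hXB, hBE, by omega, ?_⟩
    rw [hBη]
    unfold nullity
    omega

theorem nullity_add_dist_le {X : Finset α} (hX : X ⊆ M.E) (h : M.rk X < M.rk M.E) :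
    M.nullity X + M.dist M.E ≤ M.E.card - M.rk M.E + 1 := by
  obtain ⟨B, -, hBE, hBrk, hBη⟩ :=
    exists_superset_rk_eq_nullity_eq hX (M.rk M.E - 1 - M.rk X).toNat (by omega)
  have hdist : M.dist M.E ≤ (M.E \ B).card :=
    Nat.sInf_le ⟨M.E \ B, Finset.sdiff_subset, rfl, by
      rw [Finset.sdiff_sdiff_eq_self hBE]; omega⟩
  have hcard := Finset.card_sdiff_add_card_eq_card hBE
  rw [← hBη]
  unfold nullity
  omega

variable {r δ θ : ℤ} {R : α → Finset α}

theorem IsRepairSet.rk_union_le {x : α} {S Z : Finset α}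
    (h : M.IsRepairSet r δ x S) (hr : 0 ≤ r) (hZ : Z ⊆ M.E) :
    M.rk (Z ∪ S) ≤ M.rk Z + r := by
  obtain ⟨hS, -, hcard, hdist⟩ := h
  by_cases hSZ : S ⊆ M.cl Z
  · rw [rk_union_eq_of_subset_cl hZ hSZ]
    omega
  · have := nullity_add_dist_sub_one_le hZ hS hSZ
    have := Finset.card_union_le Z S
    unfold nullity at *
    omega

theorem rk_biUnion_le (hR : ∀ x ∈ M.E, M.IsRepairSet r δ x (R x)) (hr : 0 ≤ r)
    {Y : Finset α} (hY : Y ⊆ M.E) : M.rk (Y.biUnion R) ≤ Y.card * r := by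
  induction Y using Finset.induction_on with
  | empty => simp [rk_empty]
  | @insert b Y hb ih =>
    have hY' := (Finset.subset_insert b Y).trans hY
    have := (hR b (hY (Finset.mem_insert_self b Y))).rk_union_le hr
      (Finset.biUnion_subset.2 fun x hx => (hR x (hY' hx)).1)
    rw [Finset.biUnion_insert, Finset.union_comm, Finset.card_insert_of_notMem hb]
    push_cast
    linarith [ih hY']

theorem nullity_add_mul_add_dist_le (hR : ∀ x ∈ M.E, M.IsRepairSet r δ x (R x))
    (hr : 0 ≤ r) (m : ℕ) {X : Finset α} (hX : X ⊆ M.E) (h : M.rk X + m * r < M.rk M.E) :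
    M.nullity X + m * (δ - 1) + M.dist M.E ≤ M.E.card - M.rk M.E + 1 := by
  induction m generalizing X with
  | zero => simpa using nullity_add_dist_le hX (by simpa using h)
  | succ m ih =>
    obtain ⟨y, hyE, hyX⟩ := exists_mem_notMem_cl hX (by push_cast at h; nlinarith)
    obtain ⟨hRy, hyRy, -, hdist⟩ := hR y hyE
    have hη := nullity_add_dist_sub_one_le hX hRy fun h => hyX (h hyRy)
    have hrk := (hR y hyE).rk_union_le hr hX
    have := ih (Finset.union_subset hX hRy) (by push_cast at h ⊢; linarith)
    push_cast
    linarith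

theorem IsNontrivialUnion.subset {Y Y' : Finset α}
    (h : IsNontrivialUnion R Y) (hY' : Y' ⊆ Y) : IsNontrivialUnion R Y' :=
  fun x hx hsub => h x (hY' hx) (hsub.trans
    (Finset.biUnion_subset_biUnion_of_subset_left R (Finset.erase_subset_erase x hY')))

theorem isNontrivialUnion_singleton {x : α} (hx : x ∈ R x) :
    IsNontrivialUnion R {x} := by
  simpa [IsNontrivialUnion] using Finset.nonempty_iff_ne_empty.1 ⟨x, hx⟩

theorem biUnion_erase_union {Y : Finset α} {x : α} (hx : x ∈ Y) :
    (Y.erase x).biUnion R ∪ R x = Y.biUnion R := by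
  conv_rhs => rw [← Finset.insert_erase hx]
  rw [Finset.biUnion_insert, Finset.union_comm]

theorem mul_le_nullity_biUnion (hR : ∀ x ∈ M.E, M.IsRepairSet r δ x (R x)) {Y : Finset α}
    (hY : Y ⊆ M.E) {x : α} (hx : x ∈ Y) (hnt : IsNontrivialUnion R Y)
    (hcl : M.cl ((Y.erase x).biUnion R) = (Y.erase x).biUnion R)
    (hη : M.nullity ((Y.erase x).biUnion R) = (Y.erase x).card * (δ - 1)) :
    Y.card * (δ - 1) ≤ M.nullity (Y.biUnion R) := by
  have hY' := (Finset.erase_subset x Y).trans hY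
  have hstep := nullity_add_dist_sub_one_le
    (Finset.biUnion_subset.2 fun z hz => (hR z (hY' hz)).1) (hR x (hY hx)).1
    (by rw [hcl]; exact hnt x hx)
  have hcard : ((Y.erase x).card : ℤ) = Y.card - 1 := by
    rw [Finset.card_erase_of_mem hx, Nat.cast_sub (Finset.card_pos.2 ⟨x, hx⟩)]
    simp
  rw [biUnion_erase_union hx, hη, hcard] at hstep
  linarith [(hR x (hY hx)).2.2.2]

theorem nullity_cl_le (hR : ∀ x ∈ M.E, M.IsRepairSet r δ x (R x)) (hr : 0 ≤ r)
    (hopt : (M.E.card : ℤ) - M.rk M.E + 1 - M.dist M.E = (θ - 1) * (δ - 1))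
    (hθ : (θ - 1) * r < M.rk M.E) {X : Finset α} (hX : X ⊆ M.E) {j : ℕ} (hj : (j : ℤ) < θ)
    (hXr : M.rk X ≤ j * r) : M.nullity (M.cl X) ≤ j * (δ - 1) := by
  have := nullity_add_mul_add_dist_le hR hr (θ - 1 - j).toNat (cl_subset_E X) (by
    rw [rk_cl hX, Int.toNat_of_nonneg (by omega)]
    nlinarith)
  rw [Int.toNat_of_nonneg (by omega)] at this
  nlinarith

theorem cl_biUnion_eq_and_nullity_eq (hR : ∀ x ∈ M.E, M.IsRepairSet r δ x (R x))
    (hr : 0 ≤ r) (hopt : (M.E.card : ℤ) - M.rk M.E + 1 - M.dist M.E = (θ - 1) * (δ - 1))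
    (hθ : (θ - 1) * r < M.rk M.E) {Y : Finset α} (hY : Y ⊆ M.E) (hnt : IsNontrivialUnion R Y)
    (hYθ : (Y.card : ℤ) < θ) :
    M.cl (Y.biUnion R) = Y.biUnion R ∧ M.nullity (Y.biUnion R) = Y.card * (δ - 1) := by
  induction Y using Finset.strongInduction with
  | H Y ih =>
  have hUE : Y.biUnion R ⊆ M.E := Finset.biUnion_subset.2 fun x hx => (hR x (hY hx)).1
  have hlow : Y.card * (δ - 1) ≤ M.nullity (Y.biUnion R) := by
    rcases Y.eq_empty_or_nonempty with rfl | ⟨x, hx⟩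
    · simpa using nullity_nonneg hUE
    obtain ⟨hcl, hη⟩ := ih _ (Finset.erase_ssubset hx) ((Finset.erase_subset x Y).trans hY)
      (hnt.subset (Finset.erase_subset x Y)) (by simp [Finset.card_erase_of_mem hx]; omega)
    exact mul_le_nullity_biUnion hR hY hx hnt hcl hη
  have hup := nullity_cl_le hR hr hopt hθ hUE hYθ (rk_biUnion_le hR hr hY)
  have hcl := cl_eq_of_nullity_cl_le hUE (hup.trans hlow)
  exact ⟨hcl, le_antisymm (hcl ▸ hup) hlow⟩

theorem biUnion_mem_Z (hR : ∀ x ∈ M.E, M.IsRepairSet r δ x (R x)) (hr : 0 ≤ r)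
    (hδ : 2 ≤ δ) (hopt : (M.E.card : ℤ) - M.rk M.E + 1 - M.dist M.E = (θ - 1) * (δ - 1))
    (hθ : (θ - 1) * r < M.rk M.E) {Y : Finset α} (hY : Y ⊆ M.E) (hnt : IsNontrivialUnion R Y)
    (hYθ : (Y.card : ℤ) < θ) : Y.biUnion R ∈ M.Z :=
  ⟨Finset.biUnion_subset.2 fun x hx => (hR x (hY hx)).1,
    cyclic_biUnion (fun x hx => (hR x (hY hx)).1)
      (fun x hx => cyclic_of_two_le_dist (hR x (hY hx)).1 (by linarith [(hR x (hY hx)).2.2.2])),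
    (cl_biUnion_eq_and_nullity_eq hR hr hopt hθ hY hnt hYθ).1⟩

theorem card_inter_biUnion_erase_le (hR : ∀ x ∈ M.E, M.IsRepairSet r δ x (R x))
    (hr : 0 ≤ r) (hopt : (M.E.card : ℤ) - M.rk M.E + 1 - M.dist M.E = (θ - 1) * (δ - 1))
    (hθ : (θ - 1) * r < M.rk M.E) {Y : Finset α} (hY : Y ⊆ M.E) (hnt : IsNontrivialUnion R Y)
    (hYθ : (Y.card : ℤ) ≤ θ) {x : α} (hx : x ∈ Y) :
    ((R x ∩ (Y.erase x).biUnion R).card : ℤ) ≤ (R x).card - δ := by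
  have hY' := (Finset.erase_subset x Y).trans hY
  have hcl := (cl_biUnion_eq_and_nullity_eq hR hr hopt hθ hY'
    (hnt.subset (Finset.erase_subset x Y))
    (by rw [Finset.card_erase_of_mem hx]; have := Finset.card_pos.2 ⟨x, hx⟩; omega)).1
  have hdist := dist_le_card_sdiff (Finset.biUnion_subset.2 fun z hz => (hR z (hY' hz)).1)
    (hR x (hY hx)).1 (by rw [hcl]; exact hnt x hx)
  have := Finset.card_sdiff_add_card_inter (R x) ((Y.erase x).biUnion R)
  linarith [(hR x (hY hx)).2.2.2]

theorem eq_E_of_biUnion_subset (hR : ∀ x ∈ M.E, M.IsRepairSet r δ x (R x)) (hr : 0 ≤ r)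
    (hδ : 2 ≤ δ) (hopt : (M.E.card : ℤ) - M.rk M.E + 1 - M.dist M.E = (θ - 1) * (δ - 1))
    (hθ : (θ - 1) * r < M.rk M.E) (hθ1 : 1 ≤ θ) {Y : Finset α} (hY : Y ⊆ M.E)
    (hnt : IsNontrivialUnion R Y) (hYθ : θ ≤ Y.card) {W : Finset α} (hW : W ⊆ M.E)
    (hWcl : M.cl W = W) (hUW : Y.biUnion R ⊆ W) : W = M.E := by
  by_contra hne
  have hWη := nullity_add_dist_le hW (rk_lt_of_cl_eq hW hWcl hne)
  obtain ⟨Y', hY'Y, hY'card⟩ := Finset.exists_subset_card_eq (s := Y) (n := θ.toNat) (by omega)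
  obtain ⟨x, hx⟩ : Y'.Nonempty := Finset.card_pos.1 (by omega)
  have hnt' := hnt.subset hY'Y
  obtain ⟨hcl, hη⟩ := cl_biUnion_eq_and_nullity_eq hR hr hopt hθ
    ((Finset.erase_subset x Y').trans (hY'Y.trans hY)) (hnt'.subset (Finset.erase_subset x Y'))
    (by rw [Finset.card_erase_of_mem hx]; omega)
  have hlow := mul_le_nullity_biUnion hR (hY'Y.trans hY) hx hnt' hcl hη
  have hmono := nullity_mono ((Finset.biUnion_subset_biUnion_of_subset_left R hY'Y).trans hUW) hW
  rw [hY'card, Int.toNat_of_nonneg (by omega)] at hlow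
  nlinarith

end RankMatroid

theorem Int.ceil_div_sub_one_mul_lt {k r : ℤ} (hr : 0 < r) : (⌈(k : ℚ) / r⌉ - 1) * r < k := by
  have h := Int.ceil_lt_add_one ((k : ℚ) / r)
  have : ((⌈(k : ℚ) / r⌉ - 1 : ℤ) : ℚ) * r < k := by
    rw [← lt_div_iff₀ (by exact_mod_cast hr)]
    push_cast
    linarith
  exact_mod_cast this

theorem Int.one_lt_ceil_div {k r : ℤ} (hr : 0 < r) (hrk : r < k) : 1 < ⌈(k : ℚ) / r⌉ :=
  Int.lt_ceil.2 <| by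
    rw [Int.cast_one, one_lt_div (by exact_mod_cast hr)]
    exact_mod_cast hrk

theorem stmt14_general {α : Type} [DecidableEq α] (M : RankMatroid α) (r δ : ℤ)
    (hr : 1 ≤ r) (hδ : 2 ≤ δ)
    (hrk : r < M.rk M.E)
    (R : α → Finset α) (hR : ∀ x ∈ M.E, M.IsRepairSet r δ x (R x))
    (hd : (M.dist M.E : ℤ) = (M.E.card : ℤ) - M.rk M.E + 1 -
      (⌈(M.rk M.E : ℚ) / (r : ℚ)⌉ - 1) * (δ - 1)) :
    (∅ ∈ M.Z) ∧
    (∀ x ∈ M.E, R x ∈ M.Z ∧ (¬ ∃ W ∈ M.Z, ∅ ⊂ W ∧ W ⊂ R x) ∧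
      ((R x).card : ℤ) - M.rk (R x) = δ - 1) ∧
    (∀ Y ⊆ M.E, (∀ x ∈ Y, ¬ R x ⊆ (Y.erase x).biUnion R) →
      (((Y.card : ℤ) < ⌈(M.rk M.E : ℚ) / (r : ℚ)⌉ → Y.biUnion R ∈ M.Z) ∧
       ((Y.card : ℤ) < ⌈(M.rk M.E : ℚ) / (r : ℚ)⌉ →
          M.rk (Y.biUnion R) = ((Y.biUnion R).card : ℤ) - (Y.card : ℤ) * (δ - 1)) ∧
       ((Y.card : ℤ) ≤ ⌈(M.rk M.E : ℚ) / (r : ℚ)⌉ → ∀ x ∈ Y,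
          ((R x ∩ (Y.erase x).biUnion R).card : ℤ) ≤ ((R x).card : ℤ) - δ) ∧
       ((⌈(M.rk M.E : ℚ) / (r : ℚ)⌉ ≤ (Y.card : ℤ)) → ∀ W ∈ M.Z,
          Y.biUnion R ⊆ W → W = M.E))) := by
  open RankMatroid in
  set θ := ⌈(M.rk M.E : ℚ) / (r : ℚ)⌉
  have hr0 : 0 ≤ r := by omega
  have hθ : (θ - 1) * r < M.rk M.E := Int.ceil_div_sub_one_mul_lt (by omega)
  have hθ1 : 1 < θ := Int.one_lt_ceil_div (by omega) hrk
  have hopt : (M.E.card : ℤ) - M.rk M.E + 1 - M.dist M.E = (θ - 1) * (δ - 1) := by linarith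
  have hflat {Y : Finset α} := cl_biUnion_eq_and_nullity_eq hR hr0 hopt hθ (Y := Y)
  have hZ {Y : Finset α} := biUnion_mem_Z hR hr0 hδ hopt hθ (Y := Y)
  refine ⟨by simpa using hZ (Finset.empty_subset _) (by simp [IsNontrivialUnion]) (by simp; omega),
    fun x hx => ?_, fun Y hY hnt => ⟨hZ hY hnt, fun hYθ => ?_,
      card_inter_biUnion_erase_le hR hr0 hopt hθ hY hnt,
      fun hYθ W hW => eq_E_of_biUnion_subset hR hr0 hδ hopt hθ (by omega) hY hnt hYθ hW.1 hW.2.2⟩⟩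
  · obtain ⟨hRx, hxR, -, hdist⟩ := hR x hx
    have hx' : {x} ⊆ M.E := Finset.singleton_subset_iff.2 hx
    have hsing := isNontrivialUnion_singleton hxR
    have hη : M.nullity (R x) = δ - 1 := by
      simpa using (hflat hx' hsing (by simpa using hθ1)).2
    refine ⟨by simpa using hZ hx' hsing (by simpa using hθ1), ?_, hη⟩
    rintro ⟨W, hW, hW0, hWR⟩
    exact hW0.ne' (eq_empty_of_mem_Z_of_ssubset hRx (by linarith) hW hWR)
  · have := (hflat hY hnt hYθ).2
    unfold nullity at this
    linarith

/-- Structure theorem for Singleton-optimal `(n,k,d,r,δ)_a`-matroids. -/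
theorem stmt14 {α : Type} [DecidableEq α] (M : RankMatroid α) (r δ : ℤ)
    (hr : 1 ≤ r) (hδ : 2 ≤ δ) (hM : M.NonDegenerate)
    (hrk : r < M.rk M.E)
    (R : α → Finset α) (hR : ∀ x ∈ M.E, M.IsRepairSet r δ x (R x))
    (hd : (M.dist M.E : ℤ) = (M.E.card : ℤ) - M.rk M.E + 1 -
      (⌈(M.rk M.E : ℚ) / (r : ℚ)⌉ - 1) * (δ - 1)) :
    (∅ ∈ M.Z) ∧
    (∀ x ∈ M.E, R x ∈ M.Z ∧ (¬ ∃ W ∈ M.Z, ∅ ⊂ W ∧ W ⊂ R x) ∧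
      ((R x).card : ℤ) - M.rk (R x) = δ - 1) ∧
    (∀ Y ⊆ M.E, (∀ x ∈ Y, ¬ R x ⊆ (Y.erase x).biUnion R) →
      (((Y.card : ℤ) < ⌈(M.rk M.E : ℚ) / (r : ℚ)⌉ → Y.biUnion R ∈ M.Z) ∧
       ((Y.card : ℤ) < ⌈(M.rk M.E : ℚ) / (r : ℚ)⌉ →
          M.rk (Y.biUnion R) = ((Y.biUnion R).card : ℤ) - (Y.card : ℤ) * (δ - 1)) ∧
       ((Y.card : ℤ) ≤ ⌈(M.rk M.E : ℚ) / (r : ℚ)⌉ → ∀ x ∈ Y,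
          ((R x ∩ (Y.erase x).biUnion R).card : ℤ) ≤ ((R x).card : ℤ) - δ) ∧
       ((⌈(M.rk M.E : ℚ) / (r : ℚ)⌉ ≤ (Y.card : ℤ)) → ∀ W ∈ M.Z,
          Y.biUnion R ⊆ W → W = M.E))) :=
  stmt14_general M r δ hr hδ hrk R hR hd
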